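/- arXiv:2106.15096 — 2 statements merged into one kernel-verified Lean document; each statement's English description precedes it below -/
import Mathlib

section
/- Let m > n ≥ 1 be integers and let i₁, i₂ be integers with 0 ≤ i₁ ≤ (m−n+1)/2 and 0 ≤ i₂ ≤ (m−n+1)/2. For i ∈ {i₁, i₂} let f_i: ℝ^m → ℝ^n be given by f_i(x) = (x_1,…,x_{n−1}, Σ_{j=n}^{m−i} x_j² − Σ_{j=m−i+1}^{m} x_j²). Suppose there exist open neighborhoods U ⊆ ℝ^m and V ⊆ ℝ^n of the origins, and smooth open embeddings Φ: U → ℝ^m and Ψ: V → ℝ^n with Φ(0) = 0 and Ψ(0) = 0, such that f_{i₁} = Ψ ∘ f_{i₂} ∘ Φ on U. Then i₁ = i₂. -/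
/-!
STATEMENT 10: if two fold normal forms `f_{i₁}`, `f_{i₂}` (with the normalization
`0 ≤ i ≤ (m−n+1)/2`) are conjugate near the origin by smooth open embeddings
`Φ` (of the source) and `Ψ` (of the target) fixing the origins, then `i₁ = i₂`.
-/

/-- The local normal form of a fold map of index `i`. -/
noncomputable def foldNormal (m n i : ℕ) :
    EuclideanSpace ℝ (Fin m) → EuclideanSpace ℝ (Fin n) := fun x => WithLp.toLp 2 fun k =>
  if (k : ℕ) + 1 < n then
    (if h : (k : ℕ) < m then x ⟨(k : ℕ), h⟩ else 0)
  else
    ∑ j : Fin m, if (j : ℕ) + 1 < n then 0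
      else (if (j : ℕ) < m - i then (x j) ^ 2 else -(x j) ^ 2)

/-- A map `Φ`, defined on an open set `U`, is a *smooth open embedding* if it is smooth
on `U`, its image is open, and it admits a smooth inverse defined on that image:
that is, it is a diffeomorphism of `U` onto an open subset of the target. -/
def IsSmoothOpenEmbeddingOn {E F : Type*} [NormedAddCommGroup E] [NormedSpace ℝ E]
    [NormedAddCommGroup F] [NormedSpace ℝ F] (Φ : E → F) (U : Set E) : Prop :=
  ContDiffOn ℝ (⊤ : ℕ∞) Φ U ∧ IsOpen (Φ '' U) ∧
    ∃ Φinv : F → E, ContDiffOn ℝ (⊤ : ℕ∞) Φinv (Φ '' U) ∧ ∀ x ∈ U, Φinv (Φ x) = x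

open Asymptotics Filter Topology

/-! ### Auxiliary definitions and lemmas -/

noncomputable def qform (m n i : ℕ) (x : EuclideanSpace ℝ (Fin m)) : ℝ :=
  ∑ j : Fin m, if (j : ℕ) + 1 < n then 0
      else (if (j : ℕ) < m - i then (x j) ^ 2 else -(x j) ^ 2)

lemma foldNormal_lt (m n i : ℕ) (x) (k : Fin n) (hk : (k : ℕ) + 1 < n) (hm : (k : ℕ) < m) :
    foldNormal m n i x k = x ⟨(k : ℕ), hm⟩ := by simp [foldNormal, hk, hm]

lemma foldNormal_last (m n i : ℕ) (x) (k : Fin n) (hk : ¬((k : ℕ) + 1 < n)) :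
    foldNormal m n i x k = qform m n i x := by simp [foldNormal, qform, hk]

lemma foldNormal_zero (m n i : ℕ) : foldNormal m n i 0 = 0 := by
  ext k
  by_cases hk : (k : ℕ) + 1 < n <;> simp [foldNormal, hk]

lemma qform_smul (m n i : ℕ) (t : ℝ) (x) : qform m n i (t • x) = t ^ 2 * qform m n i x := by
  simp only [qform, Finset.mul_sum, PiLp.smul_apply, smul_eq_mul]
  refine Finset.sum_congr rfl fun j _ => ?_
  split_ifs <;> ring

noncomputable def Pproj (m n : ℕ) (h : n ≤ m) :
    EuclideanSpace ℝ (Fin m) →L[ℝ] EuclideanSpace ℝ (Fin n) :=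
  (PiLp.continuousLinearEquiv 2 ℝ (fun _ : Fin n => ℝ)).symm.toContinuousLinearMap.comp
    (ContinuousLinearMap.pi fun k : Fin n =>
      if (k : ℕ) + 1 < n then EuclideanSpace.proj (⟨(k : ℕ), lt_of_lt_of_le k.2 h⟩ : Fin m) else 0)

lemma Pproj_apply (m n : ℕ) (h : n ≤ m) (x) (k : Fin n) :
    Pproj m n h x k = if (k : ℕ) + 1 < n then x ⟨(k : ℕ), lt_of_lt_of_le k.2 h⟩ else 0 := by
  by_cases hk : (k : ℕ) + 1 < n <;> simp [Pproj, hk]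

lemma euclid_abs_apply_le {m : ℕ} (x : EuclideanSpace ℝ (Fin m)) (j : Fin m) : |x j| ≤ ‖x‖ := by
  rw [EuclideanSpace.norm_eq]
  calc |x j| = Real.sqrt (‖x j‖ ^ 2) := by
        rw [Real.norm_eq_abs, Real.sqrt_sq_eq_abs, abs_abs]
    _ ≤ _ := by
        apply Real.sqrt_le_sqrt
        exact Finset.single_le_sum (fun i _ => sq_nonneg ‖x i‖) (Finset.mem_univ j)

lemma euclid_sum_apply {m : ℕ} {ι : Type*} (s : Finset ι) (f : ι → EuclideanSpace ℝ (Fin m))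
    (j : Fin m) : (∑ k ∈ s, f k) j = ∑ k ∈ s, f k j :=
  map_sum (EuclideanSpace.projₗ j (𝕜 := ℝ)) f s

lemma euclid_eq_sum_single {m : ℕ} (x : EuclideanSpace ℝ (Fin m)) :
    x = ∑ k : Fin m, EuclideanSpace.single k (x k) := by
  ext j
  rw [euclid_sum_apply]
  simp [EuclideanSpace.single_apply]

lemma euclid_single_eq_smul {m : ℕ} (k : Fin m) (c : ℝ) :
    EuclideanSpace.single k c = c • EuclideanSpace.single k (1 : ℝ) := by
  ext j
  simp only [EuclideanSpace.single_apply, PiLp.smul_apply, smul_eq_mul]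
  split_ifs <;> simp

section
variable {E : Type*} [NormedAddCommGroup E] [NormedSpace ℝ E]

lemma hasFDerivAt_euclidean {n : ℕ} {f : E → EuclideanSpace ℝ (Fin n)}
    {f' : E →L[ℝ] EuclideanSpace ℝ (Fin n)} {x : E}
    (h : ∀ k : Fin n, HasFDerivAt (fun x => f x k) ((EuclideanSpace.proj k).comp f') x) :
    HasFDerivAt f f' x := by
  let iso := PiLp.continuousLinearEquiv 2 ℝ (fun _ : Fin n => ℝ)
  apply iso.comp_hasFDerivAt_iff.mp
  apply hasFDerivAt_pi''
  intro k
  have heq : (ContinuousLinearMap.proj k).comp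
      ((iso : EuclideanSpace ℝ (Fin n) →L[ℝ] (Fin n → ℝ)).comp f')
      = (EuclideanSpace.proj k).comp f' := by ext y; rfl
  rw [heq]
  exact h k
end

lemma isBigO_sq_of_deriv {F : Type*} [NormedAddCommGroup F] [NormedSpace ℝ F]
    {u u' : ℝ → F}
    (hder : ∀ᶠ t in 𝓝 (0 : ℝ), HasDerivAt u (u' t) t)
    (h0 : u 0 = 0) (hO : u' =O[𝓝 (0 : ℝ)] fun t => t) :
    u =O[𝓝 (0 : ℝ)] fun t => t ^ 2 := by
  obtain ⟨C, hC0, hCw⟩ := hO.exists_nonneg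
  have hb := hCw.bound
  obtain ⟨δ, hδ, hall⟩ := Metric.eventually_nhds_iff.mp (hb.and hder)
  rw [isBigO_iff]
  refine ⟨C, Metric.eventually_nhds_iff.mpr ⟨δ, hδ, fun t ht => ?_⟩⟩
  have habs : ∀ x ∈ Set.Icc (-|t|) |t|, dist x (0 : ℝ) < δ := by
    intro x hx
    rw [Real.dist_eq, sub_zero]
    rw [Real.dist_eq, sub_zero] at ht
    exact lt_of_le_of_lt (abs_le.mpr ⟨hx.1, hx.2⟩) ht
  have hd : ∀ x ∈ Set.Icc (-|t|) |t|, HasDerivWithinAt u (u' x) (Set.Icc (-|t|) |t|) x :=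
    fun x hx => ((hall (habs x hx)).2).hasDerivWithinAt
  have hbd : ∀ x ∈ Set.Icc (-|t|) |t|, ‖u' x‖ ≤ C * |t| := by
    intro x hx
    refine le_trans (hall (habs x hx)).1 ?_
    rw [Real.norm_eq_abs]
    exact mul_le_mul_of_nonneg_left (abs_le.mpr ⟨hx.1, hx.2⟩) hC0
  have ht0 : (0 : ℝ) ∈ Set.Icc (-|t|) |t| := by constructor <;> simp [abs_nonneg]
  have htt : t ∈ Set.Icc (-|t|) |t| := ⟨neg_abs_le t, le_abs_self t⟩
  have key := Convex.norm_image_sub_le_of_norm_hasDerivWithin_le hd hbd (convex_Icc _ _) ht0 htt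
  rw [h0, sub_zero, sub_zero, Real.norm_eq_abs] at key
  calc ‖u t‖ ≤ C * |t| * |t| := key
    _ = C * ‖t ^ 2‖ := by rw [Real.norm_eq_abs, abs_pow]; ring

lemma eq_zero_of_sq_littleO {c : ℝ} (h : (fun t : ℝ => c * t ^ 2) =o[𝓝 (0 : ℝ)] fun t => t ^ 2) :
    c = 0 := by
  by_contra hc
  have h2 := h.def (half_pos (abs_pos.mpr hc))
  have h3 := h2.filter_mono (nhdsWithin_le_nhds (s := {(0 : ℝ)}ᶜ))
  obtain ⟨t, ht, hne⟩ := (h3.and eventually_mem_nhdsWithin).exists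
  simp only [Real.norm_eq_abs, abs_mul, abs_pow] at ht
  have ht2 : 0 < |t| ^ 2 := by
    have : t ≠ 0 := hne
    positivity
  nlinarith [abs_pos.mpr hc]

lemma hasFDerivAt_qform_zero (m n i : ℕ) :
    HasFDerivAt (qform m n i) (0 : EuclideanSpace ℝ (Fin m) →L[ℝ] ℝ) 0 := by
  have h : ∀ j : Fin m, HasFDerivAt
      (fun x : EuclideanSpace ℝ (Fin m) =>
        if (j : ℕ) + 1 < n then (0 : ℝ) else (if (j : ℕ) < m - i then (x j) ^ 2 else -(x j) ^ 2))
      (0 : EuclideanSpace ℝ (Fin m) →L[ℝ] ℝ) 0 := by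
    intro j
    by_cases h1 : (j : ℕ) + 1 < n
    · simp only [if_pos h1]; exact hasFDerivAt_const 0 0
    · simp only [if_neg h1]
      have hsq : HasFDerivAt (fun x : EuclideanSpace ℝ (Fin m) => (x j) ^ 2)
          (0 : EuclideanSpace ℝ (Fin m) →L[ℝ] ℝ) 0 := by
        have hp : HasFDerivAt (fun x : EuclideanSpace ℝ (Fin m) => x j)
            (EuclideanSpace.proj j (𝕜 := ℝ)) 0 := (EuclideanSpace.proj j (𝕜 := ℝ)).hasFDerivAt
        have := hp.mul hp
        have heq : (fun x : EuclideanSpace ℝ (Fin m) => (x j) ^ 2)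
            = fun x => x j * x j := by funext x; ring
        rw [heq]
        exact this.congr_fderiv (by ext y; simp)
      by_cases h2 : (j : ℕ) < m - i
      · simp only [if_pos h2]; exact hsq
      · simp only [if_neg h2]
        have := hsq.neg
        exact this.congr_fderiv (by simp)
  have := HasFDerivAt.fun_sum (fun j (_ : j ∈ Finset.univ) => h j)
  exact this.congr_fderiv (by simp)

lemma hasFDerivAt_foldNormal (m n i : ℕ) (h : n ≤ m) :
    HasFDerivAt (foldNormal m n i) (Pproj m n h) 0 := by
  apply hasFDerivAt_euclidean
  intro k
  by_cases hk : (k : ℕ) + 1 < n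
  · have hm : (k : ℕ) < m := lt_of_lt_of_le k.2 h
    have heq : (fun x : EuclideanSpace ℝ (Fin m) => foldNormal m n i x k)
        = fun x => x ⟨(k : ℕ), hm⟩ := by
      funext x; exact foldNormal_lt m n i x k hk hm
    rw [heq]
    have hC : (EuclideanSpace.proj k (𝕜 := ℝ)).comp (Pproj m n h)
        = EuclideanSpace.proj (⟨(k : ℕ), hm⟩ : Fin m) := by
      ext x
      simp [ContinuousLinearMap.comp_apply, Pproj_apply, hk]
    rw [hC]
    exact (EuclideanSpace.proj (𝕜 := ℝ) (⟨(k : ℕ), hm⟩ : Fin m)).hasFDerivAt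
  · have heq : (fun x : EuclideanSpace ℝ (Fin m) => foldNormal m n i x k) = qform m n i := by
      funext x; exact foldNormal_last m n i x k hk
    rw [heq]
    have hC : (EuclideanSpace.proj k (𝕜 := ℝ)).comp (Pproj m n h) = 0 := by
      ext x
      simp [ContinuousLinearMap.comp_apply, Pproj_apply, hk]
    rw [hC]
    exact hasFDerivAt_qform_zero m n i

lemma card_filter_ico (m a b : ℕ) (hb : b ≤ m) :
    (Finset.univ.filter fun j : Fin m => a ≤ (j : ℕ) ∧ (j : ℕ) < b).card = b - a := by
  rw [← Nat.card_Ico a b]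
  apply Finset.card_bij (fun (j : Fin m) _ => (j : ℕ))
  · intro j hj
    simp only [Finset.mem_filter, Finset.mem_univ, true_and] at hj
    simp [Finset.mem_Ico, hj.1, hj.2]
  · intro j _ j' _ h
    exact Fin.val_injective h
  · intro x hx
    simp only [Finset.mem_Ico] at hx
    exact ⟨⟨x, lt_of_lt_of_le hx.2 hb⟩, by simp [hx.1, hx.2], rfl⟩

lemma exists_kernel_vec (m : ℕ) (A : EuclideanSpace ℝ (Fin m) →L[ℝ] EuclideanSpace ℝ (Fin m))
    (s t : Finset (Fin m)) (hst : t.card < s.card) :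
    ∃ v : EuclideanSpace ℝ (Fin m), v ≠ 0 ∧ (∀ j ∉ s, v j = 0) ∧ ∀ j ∈ t, A v j = 0 := by
  classical
  let ext : ({x // x ∈ s} → ℝ) →ₗ[ℝ] EuclideanSpace ℝ (Fin m) :=
    { toFun := fun y => WithLp.toLp 2 fun j => if h : j ∈ s then y ⟨j, h⟩ else 0
      map_add' := by
        intro a b; ext j; by_cases h : j ∈ s <;>
          simp [h, PiLp.add_apply]
      map_smul' := by
        intro c a; ext j; by_cases h : j ∈ s <;>
          simp [h, PiLp.smul_apply] }
  let L : ({x // x ∈ s} → ℝ) →ₗ[ℝ] ({x // x ∈ t} → ℝ) :=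
    { toFun := fun y => fun j => A (ext y) (j : Fin m)
      map_add' := by intro a b; funext j; simp
      map_smul' := by intro c a; funext j; simp }
  have hnotinj : ¬ Function.Injective L := by
    intro hinj
    have h1 := LinearMap.finrank_le_finrank_of_injective hinj
    rw [Module.finrank_fintype_fun_eq_card, Module.finrank_fintype_fun_eq_card] at h1
    simp only [Fintype.card_coe] at h1
    omega
  obtain ⟨a, b, hab, hne⟩ := Function.not_injective_iff.mp hnotinj
  refine ⟨ext (a - b), ?_, ?_, ?_⟩
  · intro h
    apply hne
    have hz : a - b = 0 := by
      funext p
      have := congrArg (fun w : EuclideanSpace ℝ (Fin m) => w (p : Fin m)) h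
      simp only [ext, LinearMap.coe_mk, AddHom.coe_mk, WithLp.ofLp_toLp] at this
      rw [dif_pos p.2] at this
      simpa using this
    exact sub_eq_zero.mp hz
  · intro j hj
    simp only [ext, LinearMap.coe_mk, AddHom.coe_mk, WithLp.ofLp_toLp]
    rw [dif_neg hj]
  · intro j hj
    have hz : L (a - b) = 0 := by rw [map_sub, hab, sub_self]
    have h2 := congrFun hz (⟨j, hj⟩ : {x // x ∈ t})
    simpa [L] using h2

lemma qform_pos (m n i : ℕ) (v : EuclideanSpace ℝ (Fin m)) (hv : v ≠ 0)
    (hsupp : ∀ j : Fin m, ¬(n - 1 ≤ (j : ℕ) ∧ (j : ℕ) < m - i) → v j = 0) :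
    0 < qform m n i v := by
  apply Finset.sum_pos'
  · intro j _
    by_cases h1 : (j : ℕ) + 1 < n
    · simp [h1]
    · by_cases h2 : (j : ℕ) < m - i
      · simp only [if_neg h1, if_pos h2]; positivity
      · have : v j = 0 := hsupp j (by omega)
        simp [h1, h2, this]
  · have hex : ∃ j, v j ≠ 0 := by
      by_contra hc
      push_neg at hc
      exact hv (by ext j; simpa using hc j)
    obtain ⟨j, hj⟩ := hex
    have hjr : n - 1 ≤ (j : ℕ) ∧ (j : ℕ) < m - i := by
      by_contra hc
      exact hj (hsupp j hc)
    refine ⟨j, Finset.mem_univ j, ?_⟩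
    have h1 : ¬((j : ℕ) + 1 < n) := by omega
    simp only [if_neg h1, if_pos hjr.2]
    positivity

lemma qform_neg (m n i : ℕ) (v : EuclideanSpace ℝ (Fin m)) (hv : v ≠ 0)
    (hsupp : ∀ j : Fin m, ¬(m - i ≤ (j : ℕ)) → v j = 0) (hni : n - 1 ≤ m - i) :
    qform m n i v < 0 := by
  have hlt : 0 < -qform m n i v := by
    rw [qform, ← Finset.sum_neg_distrib]
    apply Finset.sum_pos'
    · intro j _
      by_cases h1 : (j : ℕ) + 1 < n
      · simp [h1]
      · by_cases h2 : (j : ℕ) < m - i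
        · have : v j = 0 := hsupp j (by omega)
          simp [h1, h2, this]
        · simp only [if_neg h1, if_neg h2, neg_neg]; positivity
    · have hex : ∃ j, v j ≠ 0 := by
        by_contra hc
        push_neg at hc
        exact hv (by ext j; simpa using hc j)
      obtain ⟨j, hj⟩ := hex
      have hjr : m - i ≤ (j : ℕ) := by
        by_contra hc
        exact hj (hsupp j hc)
      refine ⟨j, Finset.mem_univ j, ?_⟩
      have h1 : ¬((j : ℕ) + 1 < n) := by omega
      have h2 : ¬((j : ℕ) < m - i) := by omega
      simp only [if_neg h1, if_neg h2, neg_neg]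
      positivity
  linarith

lemma qform_nonpos (m n i : ℕ) (v : EuclideanSpace ℝ (Fin m))
    (hsupp : ∀ j : Fin m, (n - 1 ≤ (j : ℕ) ∧ (j : ℕ) < m - i) → v j = 0) :
    qform m n i v ≤ 0 := by
  apply Finset.sum_nonpos
  intro j _
  by_cases h1 : (j : ℕ) + 1 < n
  · simp [h1]
  · by_cases h2 : (j : ℕ) < m - i
    · have : v j = 0 := hsupp j (by omega)
      simp [h1, h2, this]
    · simp only [if_neg h1, if_neg h2, neg_nonpos]; positivity

lemma qform_nonneg (m n i : ℕ) (v : EuclideanSpace ℝ (Fin m))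
    (hsupp : ∀ j : Fin m, (m - i ≤ (j : ℕ)) → v j = 0) :
    0 ≤ qform m n i v := by
  apply Finset.sum_nonneg
  intro j _
  by_cases h1 : (j : ℕ) + 1 < n
  · simp [h1]
  · by_cases h2 : (j : ℕ) < m - i
    · simp only [if_neg h1, if_pos h2]; positivity
    · have : v j = 0 := hsupp j (by omega)
      simp [h1, h2, this]

set_option maxHeartbeats 2000000 in
theorem statement10 (m n i₁ i₂ : ℕ) (hmn : m > n) (hn : 1 ≤ n)
    (hi₁ : 2 * i₁ ≤ m - n + 1) (hi₂ : 2 * i₂ ≤ m - n + 1)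
    (U : Set (EuclideanSpace ℝ (Fin m))) (V : Set (EuclideanSpace ℝ (Fin n)))
    (hU : IsOpen U) (hV : IsOpen V) (hU0 : (0 : EuclideanSpace ℝ (Fin m)) ∈ U)
    (hV0 : (0 : EuclideanSpace ℝ (Fin n)) ∈ V)
    (Φ : EuclideanSpace ℝ (Fin m) → EuclideanSpace ℝ (Fin m))
    (Ψ : EuclideanSpace ℝ (Fin n) → EuclideanSpace ℝ (Fin n))
    (hΦ : IsSmoothOpenEmbeddingOn Φ U) (hΨ : IsSmoothOpenEmbeddingOn Ψ V)
    (hΦ0 : Φ 0 = 0) (hΨ0 : Ψ 0 = 0)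
    (hmapsto : ∀ x ∈ U, foldNormal m n i₂ (Φ x) ∈ V)
    (hconj : ∀ x ∈ U, foldNormal m n i₁ x = Ψ (foldNormal m n i₂ (Φ x))) :
    i₁ = i₂ := by
  classical
  obtain ⟨hΦsm, hΦopen, Φinv, hΦinvsm, hΦinvL⟩ := hΦ
  obtain ⟨hΨsm, hΨopen, Ψinv, hΨinvsm, hΨinvL⟩ := hΨ
  have hnm : n ≤ m := le_of_lt hmn
  have hΦat : ContDiffAt ℝ (⊤ : ℕ∞) Φ 0 := hΦsm.contDiffAt (hU.mem_nhds hU0)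
  have hΨat : ContDiffAt ℝ (⊤ : ℕ∞) Ψ 0 := hΨsm.contDiffAt (hV.mem_nhds hV0)
  have hΦd : DifferentiableAt ℝ Φ 0 := hΦat.differentiableAt (by simp)
  have hΨd : DifferentiableAt ℝ Ψ 0 := hΨat.differentiableAt (by simp)
  set A := fderiv ℝ Φ 0 with hAdef
  set DΨ := fderiv ℝ Ψ 0 with hDΨdef
  have hA : HasFDerivAt Φ A 0 := hΦd.hasFDerivAt
  have hDΨ : HasFDerivAt Ψ DΨ 0 := hΨd.hasFDerivAt
  -- the common first-order derivative of the fold normal forms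
  have hfold1 := hasFDerivAt_foldNormal m n i₁ hnm
  have hfold2 := hasFDerivAt_foldNormal m n i₂ hnm
  -- derivative identity P = DΨ ∘ P ∘ A
  have hg : HasFDerivAt (fun x => foldNormal m n i₂ (Φ x)) ((Pproj m n hnm).comp A) 0 := by
    have h2 : HasFDerivAt (foldNormal m n i₂) (Pproj m n hnm) (Φ 0) := by rw [hΦ0]; exact hfold2
    exact h2.comp 0 hA
  have hΨg : HasFDerivAt (fun x => Ψ (foldNormal m n i₂ (Φ x)))
      (DΨ.comp ((Pproj m n hnm).comp A)) 0 := by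
    have h0 : foldNormal m n i₂ (Φ 0) = 0 := by rw [hΦ0, foldNormal_zero]
    have h2 : HasFDerivAt Ψ DΨ (foldNormal m n i₂ (Φ 0)) := by rw [h0]; exact hDΨ
    exact h2.comp 0 hg
  have hEq : (foldNormal m n i₁)
      =ᶠ[𝓝 (0 : EuclideanSpace ℝ (Fin m))] fun x => Ψ (foldNormal m n i₂ (Φ x)) :=
    Filter.eventuallyEq_of_mem (hU.mem_nhds hU0) (fun x hx => hconj x hx)
  have hPid : Pproj m n hnm = DΨ.comp ((Pproj m n hnm).comp A) :=
    hfold1.unique (hΨg.congr_of_eventuallyEq hEq)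
  -- left inverses ⇒ A and DΨ are bijective
  have hBA : ∀ z, fderiv ℝ Φinv 0 (A z) = z := by
    have hΦinv_at : ContDiffAt ℝ (⊤ : ℕ∞) Φinv 0 :=
      hΦinvsm.contDiffAt (hΦopen.mem_nhds ⟨0, hU0, hΦ0⟩)
    have hB : HasFDerivAt Φinv (fderiv ℝ Φinv 0) (Φ 0) := by
      rw [hΦ0]; exact (hΦinv_at.differentiableAt (by simp)).hasFDerivAt
    have hcomp : HasFDerivAt (fun x => Φinv (Φ x)) ((fderiv ℝ Φinv 0).comp A) 0 := hB.comp 0 hA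
    have hIdEq : (fun x : EuclideanSpace ℝ (Fin m) => x) =ᶠ[𝓝 (0 : EuclideanSpace ℝ (Fin m))]
        fun x => Φinv (Φ x) :=
      Filter.eventuallyEq_of_mem (hU.mem_nhds hU0) (fun x hx => (hΦinvL x hx).symm)
    have hid : HasFDerivAt (fun x : EuclideanSpace ℝ (Fin m) => x)
        ((fderiv ℝ Φinv 0).comp A) 0 := hcomp.congr_of_eventuallyEq hIdEq
    have huniq := (hasFDerivAt_id (0 : EuclideanSpace ℝ (Fin m))).unique hid
    intro z
    have h2 := ContinuousLinearMap.ext_iff.mp huniq z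
    simpa using h2.symm
  have hBΨ : ∀ z, fderiv ℝ Ψinv 0 (DΨ z) = z := by
    have hΨinv_at : ContDiffAt ℝ (⊤ : ℕ∞) Ψinv 0 :=
      hΨinvsm.contDiffAt (hΨopen.mem_nhds ⟨0, hV0, hΨ0⟩)
    have hB : HasFDerivAt Ψinv (fderiv ℝ Ψinv 0) (Ψ 0) := by
      rw [hΨ0]; exact (hΨinv_at.differentiableAt (by simp)).hasFDerivAt
    have hcomp : HasFDerivAt (fun x => Ψinv (Ψ x)) ((fderiv ℝ Ψinv 0).comp DΨ) 0 := hB.comp 0 hDΨ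
    have hIdEq : (fun x : EuclideanSpace ℝ (Fin n) => x) =ᶠ[𝓝 (0 : EuclideanSpace ℝ (Fin n))]
        fun x => Ψinv (Ψ x) :=
      Filter.eventuallyEq_of_mem (hV.mem_nhds hV0) (fun x hx => (hΨinvL x hx).symm)
    have hid : HasFDerivAt (fun x : EuclideanSpace ℝ (Fin n) => x)
        ((fderiv ℝ Ψinv 0).comp DΨ) 0 := hcomp.congr_of_eventuallyEq hIdEq
    have huniq := (hasFDerivAt_id (0 : EuclideanSpace ℝ (Fin n))).unique hid
    intro z
    have h2 := ContinuousLinearMap.ext_iff.mp huniq z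
    simpa using h2.symm
  have hAinj : Function.Injective A := by
    intro x y hxy
    have := congrArg (fderiv ℝ Φinv 0) hxy
    rwa [hBA, hBA] at this
  have hDΨinj : Function.Injective DΨ := by
    intro x y hxy
    have := congrArg (fderiv ℝ Ψinv 0) hxy
    rwa [hBΨ, hBΨ] at this
  have hAsurj : Function.Surjective A :=
    LinearMap.surjective_of_injective (f := (A : EuclideanSpace ℝ (Fin m) →ₗ[ℝ]
      EuclideanSpace ℝ (Fin m))) hAinj
  have hDΨsurj : Function.Surjective DΨ :=
    LinearMap.surjective_of_injective (f := (DΨ : EuclideanSpace ℝ (Fin n) →ₗ[ℝ]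
      EuclideanSpace ℝ (Fin n))) hDΨinj
  set lastn : Fin n := ⟨n - 1, by omega⟩ with hlastdef
  have hlast_not : ¬((lastn : ℕ) + 1 < n) := by simp only [hlastdef]; omega
  -- DΨ kills the first n-1 coordinate directions in the last coordinate
  have hsingle : ∀ k : Fin n, (k : ℕ) + 1 < n → DΨ (EuclideanSpace.single k 1) lastn = 0 := by
    intro k hk
    have hm : (k : ℕ) < m := lt_of_lt_of_le k.2 hnm
    obtain ⟨u, hu⟩ := hAsurj (EuclideanSpace.single (⟨(k : ℕ), hm⟩ : Fin m) 1)
    have hPA : Pproj m n hnm (A u) = EuclideanSpace.single k 1 := by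
      rw [hu]; ext k'
      rw [Pproj_apply]
      by_cases hk' : (k' : ℕ) + 1 < n
      · rw [if_pos hk']
        rw [EuclideanSpace.single_apply, EuclideanSpace.single_apply]
        by_cases h : (k' : ℕ) = (k : ℕ) <;> simp [Fin.ext_iff, h]
      · rw [if_neg hk']
        rw [EuclideanSpace.single_apply, if_neg]
        intro hh
        have : (k' : ℕ) = (k : ℕ) := congrArg Fin.val hh
        omega
    have hPu : DΨ (Pproj m n hnm (A u)) = Pproj m n hnm u := by
      have h2 := ContinuousLinearMap.ext_iff.mp hPid u
      simpa using h2.symm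
    rw [hPA] at hPu
    rw [hPu, Pproj_apply, if_neg hlast_not]
  set lam := DΨ (EuclideanSpace.single lastn 1) lastn with hlamdef
  have hlam : ∀ y : EuclideanSpace ℝ (Fin n), DΨ y lastn = lam * y lastn := by
    intro y
    conv_lhs => rw [euclid_eq_sum_single y]
    rw [map_sum, euclid_sum_apply]
    rw [Finset.sum_eq_single lastn]
    · rw [euclid_single_eq_smul, map_smul]
      simp only [PiLp.smul_apply, smul_eq_mul]
      ring
    · intro k _ hkne
      have hkk : (k : ℕ) + 1 < n := by
        have h2 := k.2
        have h3 : (k : ℕ) ≠ n - 1 := by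
          intro hh
          exact hkne (Fin.ext (by simp [hlastdef, hh]))
        omega
      rw [euclid_single_eq_smul, map_smul]
      simp [PiLp.smul_apply, hsingle k hkk]
    · intro h2
      exact absurd (Finset.mem_univ lastn) h2
  have hlamne : lam ≠ 0 := by
    obtain ⟨y, hy⟩ := hDΨsurj (EuclideanSpace.single lastn 1)
    intro h0
    have h1 := hlam y
    rw [hy, h0, zero_mul] at h1
    rw [EuclideanSpace.single_apply, if_pos rfl] at h1
    exact one_ne_zero h1
  -- A preserves the kernel subspace K
  have hAK : ∀ w : EuclideanSpace ℝ (Fin m), (∀ j : Fin m, (j : ℕ) + 1 < n → w j = 0) →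
      ∀ j : Fin m, (j : ℕ) + 1 < n → A w j = 0 := by
    intro w hw
    have hPw : Pproj m n hnm w = 0 := by
      ext k
      rw [Pproj_apply]
      by_cases hk : (k : ℕ) + 1 < n
      · rw [if_pos hk]
        simpa using hw _ (by simpa using hk)
      · rw [if_neg hk]; simp
    have h2 : DΨ (Pproj m n hnm (A w)) = 0 := by
      have h3 := ContinuousLinearMap.ext_iff.mp hPid w
      simp only [ContinuousLinearMap.comp_apply] at h3
      rw [← h3, hPw]
    have h3 : Pproj m n hnm (A w) = 0 := by
      apply hDΨinj
      rw [h2, map_zero]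
    intro j hj
    have h4 : Pproj m n hnm (A w) ⟨(j : ℕ), by omega⟩ = (0 : EuclideanSpace ℝ (Fin n)) ⟨(j : ℕ), by omega⟩ := congrArg (fun w : EuclideanSpace ℝ (Fin n) => w ⟨(j : ℕ), by omega⟩) h3
    rw [Pproj_apply, if_pos (by simpa using hj)] at h4
    simpa using h4
  -- the key relation: Q₁ = lam · Q₂ ∘ A on the kernel subspace
  have hrel : ∀ v : EuclideanSpace ℝ (Fin m), (∀ j : Fin m, (j : ℕ) + 1 < n → v j = 0) →
      qform m n i₁ v = lam * qform m n i₂ (A v) := by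
    intro v hv
    have htv : Filter.Tendsto (fun t : ℝ => t • v) (𝓝 0) (𝓝 0) := by
      have hc : Continuous (fun t : ℝ => t • v) := continuous_id.smul continuous_const
      have h0 : (fun t : ℝ => t • v) 0 = 0 := by simp
      simpa [h0] using hc.tendsto 0
    have hUt : ∀ᶠ t : ℝ in 𝓝 0, t • v ∈ U :=
      htv.eventually (eventually_of_mem (hU.mem_nhds hU0) (fun x hx => hx))
    set a := A v with hadef
    set ρ : ℝ → EuclideanSpace ℝ (Fin m) := fun t => Φ (t • v) - t • a with hρdef
    have hder : ∀ᶠ t in 𝓝 (0 : ℝ), HasDerivAt ρ (fderiv ℝ Φ (t • v) v - a) t := by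
      filter_upwards [hUt] with t ht
      have hΦdt : DifferentiableAt ℝ Φ (t • v) :=
        (hΦsm.contDiffAt (hU.mem_nhds ht)).differentiableAt (by simp)
      have hs : HasDerivAt (fun s : ℝ => s • v) v t := by
        simpa using (hasDerivAt_id t).smul_const v
      have h1 : HasDerivAt (fun s : ℝ => Φ (s • v)) (fderiv ℝ Φ (t • v) v) t :=
        hΦdt.hasFDerivAt.comp_hasDerivAt t hs
      have h2 : HasDerivAt (fun s : ℝ => s • a) a t := by
        simpa using (hasDerivAt_id t).smul_const a
      exact h1.sub h2
    have hO : (fun t => fderiv ℝ Φ (t • v) v - a) =O[𝓝 (0 : ℝ)] fun t => t := by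
      have hfd : DifferentiableAt ℝ (fderiv ℝ Φ) 0 := by
        have h1 : ContDiffAt ℝ 1 (fderiv ℝ Φ) 0 := hΦat.fderiv_right (WithTop.coe_le_coe.mpr le_top)
        exact h1.differentiableAt one_ne_zero
      have h1 := hfd.isBigO_sub
      have h2 := h1.comp_tendsto htv
      have h3 : (fun t : ℝ => t • v - 0) =O[𝓝 (0 : ℝ)] fun t => t := by
        apply IsBigO.of_bound ‖v‖
        filter_upwards with t
        rw [sub_zero, norm_smul, Real.norm_eq_abs, mul_comm]
      have h4 := h2.trans h3
      have h5 : (fun t : ℝ => (fderiv ℝ Φ (t • v) - fderiv ℝ Φ 0) v) =O[𝓝 (0 : ℝ)]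
          fun t => fderiv ℝ Φ (t • v) - fderiv ℝ Φ 0 := by
        apply IsBigO.of_bound ‖v‖
        filter_upwards with t
        rw [mul_comm]
        exact (fderiv ℝ Φ (t • v) - fderiv ℝ Φ 0).le_opNorm v
      have h6 := h5.trans h4
      have h7 : (fun t : ℝ => (fderiv ℝ Φ (t • v) - fderiv ℝ Φ 0) v)
          = fun t => fderiv ℝ Φ (t • v) v - a := by
        funext t
        rw [ContinuousLinearMap.sub_apply, hadef]
      rwa [h7] at h6
    have hρO : ρ =O[𝓝 (0 : ℝ)] fun t => t ^ 2 :=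
      isBigO_sq_of_deriv hder (by simp [hρdef, hΦ0]) hO
    have hρOj : ∀ j : Fin m, (fun t => ρ t j) =O[𝓝 (0 : ℝ)] fun t => t ^ 2 := by
      intro j
      refine (IsBigO.of_bound 1 ?_).trans hρO
      filter_upwards with t
      rw [one_mul, Real.norm_eq_abs]
      exact euclid_abs_apply_le (ρ t) j
    have haK : ∀ j : Fin m, (j : ℕ) + 1 < n → a j = 0 := hAK v hv
    set wc : ℝ → EuclideanSpace ℝ (Fin n) := fun t => foldNormal m n i₂ (Φ (t • v)) with hwc
    set q2a := qform m n i₂ a with hq2adef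
    have hfact : ∀ t : ℝ, Φ (t • v) = ρ t + t • a := by
      intro t; simp [hρdef]
    have hsqt : Filter.Tendsto (fun t : ℝ => t ^ 2) (𝓝 (0 : ℝ)) (𝓝 0) := by
      have := (continuous_pow 2).tendsto (0 : ℝ)
      simpa using this
    have hr : (fun t => wc t lastn - t ^ 2 * q2a) =o[𝓝 (0 : ℝ)] fun t => t ^ 2 := by
      have hident : ∀ t : ℝ, wc t lastn - t ^ 2 * q2a
          = ∑ j : Fin m, (if (j : ℕ) + 1 < n then (0 : ℝ)
              else if (j : ℕ) < m - i₂ then 1 else -1)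
              * (ρ t j * (Φ (t • v) j + t * a j)) := by
        intro t
        have h1 : wc t lastn = qform m n i₂ (Φ (t • v)) :=
          foldNormal_last m n i₂ _ lastn hlast_not
        have h2 : t ^ 2 * q2a = qform m n i₂ (t • a) := (qform_smul m n i₂ t a).symm
        rw [h1, h2, qform, qform, ← Finset.sum_sub_distrib]
        refine Finset.sum_congr rfl fun j _ => ?_
        have hρj : ρ t j = Φ (t • v) j - t * a j := by
          simp [hρdef, PiLp.sub_apply, PiLp.smul_apply, smul_eq_mul]
        have hta : (t • a) j = t * a j := by simp [PiLp.smul_apply, smul_eq_mul]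
        rw [hta]
        split_ifs with h1' h2'
        · ring
        · rw [hρj]; ring
        · rw [hρj]; ring
      have hsum : ∀ j : Fin m, (fun t => (if (j : ℕ) + 1 < n then (0 : ℝ)
          else if (j : ℕ) < m - i₂ then 1 else -1)
          * (ρ t j * (Φ (t • v) j + t * a j))) =o[𝓝 (0 : ℝ)] fun t => t ^ 2 := by
        intro j
        apply IsLittleO.const_mul_left
        have hσ : Filter.Tendsto (fun t : ℝ => Φ (t • v) j + t * a j) (𝓝 0) (𝓝 0) := by
          have h1 : Filter.Tendsto (fun t : ℝ => ρ t j) (𝓝 0) (𝓝 0) :=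
            (hρOj j).trans_tendsto hsqt
          have h2 : Filter.Tendsto (fun t : ℝ => t * a j) (𝓝 0) (𝓝 0) := by
            have hc2 : Continuous (fun t : ℝ => t * a j) := continuous_id.mul continuous_const
            simpa using hc2.tendsto' (0 : ℝ) 0 (by simp)
          have h3 : (fun t : ℝ => Φ (t • v) j + t * a j)
              = fun t => ρ t j + t * a j + t * a j := by
            funext t
            rw [hfact t]
            simp only [PiLp.add_apply, PiLp.smul_apply, smul_eq_mul]
          rw [h3]
          simpa using (h1.add h2).add h2
        have hmul := (hρOj j).mul_isLittleO ((isLittleO_one_iff ℝ).mpr hσ)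
        simpa using hmul
      have hS := IsLittleO.sum (fun j (_ : j ∈ Finset.univ) => hsum j)
      exact IsLittleO.congr_left hS fun t => by rw [Finset.sum_apply]; exact (hident t).symm
    have hcoordO : ∀ k : Fin n, (fun t => wc t k) =O[𝓝 (0 : ℝ)] fun t => t ^ 2 := by
      intro k
      by_cases hk : (k : ℕ) + 1 < n
      · have hm : (k : ℕ) < m := lt_of_lt_of_le k.2 hnm
        have heq : ∀ t : ℝ, wc t k = ρ t ⟨(k : ℕ), hm⟩ := by
          intro t
          have h1 : wc t k = Φ (t • v) ⟨(k : ℕ), hm⟩ := foldNormal_lt m n i₂ _ k hk hm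
          have h0 : a ⟨(k : ℕ), hm⟩ = 0 := haK _ (by simpa using hk)
          rw [h1, hfact t]
          simp [PiLp.add_apply, PiLp.smul_apply, smul_eq_mul, h0]
        exact IsBigO.congr_left (hρOj ⟨(k : ℕ), hm⟩) fun t => (heq t).symm
      · have hk' : k = lastn := Fin.ext (by
          have := k.2
          simp only [hlastdef]
          omega)
        rw [hk']
        have h1 := hr.isBigO
        have h2 : (fun t : ℝ => t ^ 2 * q2a) =O[𝓝 (0 : ℝ)] fun t => t ^ 2 := by
          apply IsBigO.of_bound |q2a|
          filter_upwards with t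
          rw [Real.norm_eq_abs, Real.norm_eq_abs, abs_mul, mul_comm]
        have h3 := h1.add h2
        exact IsBigO.congr_left h3 fun t => by ring
    have hwO : (fun t => wc t) =O[𝓝 (0 : ℝ)] fun t => t ^ 2 := by
      have h2 : ∀ k : Fin n, (fun t => EuclideanSpace.single k (wc t k))
          =O[𝓝 (0 : ℝ)] fun t => t ^ 2 := by
        intro k
        obtain ⟨C, hC0, hCw⟩ := (hcoordO k).exists_nonneg
        apply IsBigO.of_bound C
        filter_upwards [hCw.bound] with t ht
        rw [EuclideanSpace.norm_single]
        exact ht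
      have h3 := IsBigO.sum (fun k (_ : k ∈ Finset.univ) => h2 k)
      exact IsBigO.congr_left h3 fun t => by rw [Finset.sum_apply]; exact (euclid_eq_sum_single (wc t)).symm
    have hwt0 : Filter.Tendsto wc (𝓝 0) (𝓝 0) := hwO.trans_tendsto hsqt
    have hΨerr : (fun t => Ψ (wc t) - DΨ (wc t)) =o[𝓝 (0 : ℝ)] fun t => t ^ 2 := by
      have h1 := hasFDerivAt_iff_isLittleO_nhds_zero.mp hDΨ
      have h2 : (fun y : EuclideanSpace ℝ (Fin n) => Ψ y - DΨ y)
          =o[𝓝 (0 : EuclideanSpace ℝ (Fin n))] fun y => y := by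
        simpa [hΨ0] using h1
      exact (h2.comp_tendsto hwt0).trans_isBigO hwO
    have hlastEq : ∀ᶠ t : ℝ in 𝓝 0,
        lam * (wc t lastn - t ^ 2 * q2a) + (Ψ (wc t) - DΨ (wc t)) lastn
          = (qform m n i₁ v - lam * q2a) * t ^ 2 := by
      filter_upwards [hUt] with t ht
      have h1 : foldNormal m n i₁ (t • v) lastn = Ψ (wc t) lastn :=
        congrArg (fun w : EuclideanSpace ℝ (Fin n) => w lastn) (hconj _ ht)
      rw [foldNormal_last m n i₁ _ lastn hlast_not, qform_smul] at h1
      have h2 : (Ψ (wc t) - DΨ (wc t)) lastn = Ψ (wc t) lastn - DΨ (wc t) lastn := rfl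
      rw [h2, hlam (wc t), ← h1]
      ring
    have ho : (fun t : ℝ => (qform m n i₁ v - lam * q2a) * t ^ 2)
        =o[𝓝 (0 : ℝ)] fun t => t ^ 2 := by
      have h1 := hr.const_mul_left lam
      have h2 : (fun t : ℝ => (Ψ (wc t) - DΨ (wc t)) lastn) =o[𝓝 (0 : ℝ)] fun t => t ^ 2 := by
        refine (IsBigO.of_bound 1 ?_).trans_isLittleO hΨerr
        filter_upwards with t
        rw [one_mul, Real.norm_eq_abs]
        exact euclid_abs_apply_le _ lastn
      have h3 := h1.add h2
      exact h3.congr' hlastEq EventuallyEq.rfl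
    have hzero := eq_zero_of_sq_littleO ho
    have : qform m n i₁ v - lam * q2a = 0 := hzero
    rw [hq2adef, hadef] at this
    linarith
  -- endgame: linear algebra on the signs
  rcases lt_or_gt_of_ne hlamne with hneg | hpos
  · -- lam < 0 : i₁ + i₂ ≥ m - n + 1, hence i₁ = i₂ by the normalization
    have hsum : m - n + 1 ≤ i₁ + i₂ := by
      by_contra hlt
      push_neg at hlt
      obtain ⟨v, hv0, hvs, hvt⟩ := exists_kernel_vec m A
        (Finset.univ.filter fun j : Fin m => n - 1 ≤ (j : ℕ) ∧ (j : ℕ) < m - i₁)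
        (Finset.univ.filter fun j : Fin m => m - i₂ ≤ (j : ℕ) ∧ (j : ℕ) < m)
        (by rw [card_filter_ico m (n-1) (m - i₁) (by omega), card_filter_ico m (m - i₂) m le_rfl]
            omega)
      have hK : ∀ j : Fin m, (j : ℕ) + 1 < n → v j = 0 := fun j hj =>
        hvs j (by simp only [Finset.mem_filter, Finset.mem_univ, true_and]; omega)
      have h1 : 0 < qform m n i₁ v :=
        qform_pos m n i₁ v hv0 (fun j hj =>
          hvs j (by simpa only [Finset.mem_filter, Finset.mem_univ, true_and] using hj))
      have h2 : 0 ≤ qform m n i₂ (A v) :=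
        qform_nonneg m n i₂ (A v) (fun j hj =>
          hvt j (by simp only [Finset.mem_filter, Finset.mem_univ, true_and]; exact ⟨hj, j.2⟩))
      have h3 := hrel v hK
      have h4 : lam * qform m n i₂ (A v) ≤ 0 :=
        mul_nonpos_iff.mpr (Or.inr ⟨le_of_lt hneg, h2⟩)
      linarith
    omega
  · rcases lt_trichotomy i₁ i₂ with h12 | h12 | h12
    · exfalso
      obtain ⟨v, hv0, hvs, hvt⟩ := exists_kernel_vec m A
        (Finset.univ.filter fun j : Fin m => n - 1 ≤ (j : ℕ) ∧ (j : ℕ) < m - i₁)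
        (Finset.univ.filter fun j : Fin m => n - 1 ≤ (j : ℕ) ∧ (j : ℕ) < m - i₂)
        (by rw [card_filter_ico m (n-1) (m - i₁) (by omega),
              card_filter_ico m (n-1) (m - i₂) (by omega)]
            omega)
      have hK : ∀ j : Fin m, (j : ℕ) + 1 < n → v j = 0 := fun j hj =>
        hvs j (by simp only [Finset.mem_filter, Finset.mem_univ, true_and]; omega)
      have h1 : 0 < qform m n i₁ v :=
        qform_pos m n i₁ v hv0 (fun j hj =>
          hvs j (by simpa only [Finset.mem_filter, Finset.mem_univ, true_and] using hj))
      have h2 : qform m n i₂ (A v) ≤ 0 :=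
        qform_nonpos m n i₂ (A v) (fun j hj =>
          hvt j (by simpa only [Finset.mem_filter, Finset.mem_univ, true_and] using hj))
      have h3 := hrel v hK
      have h4 : lam * qform m n i₂ (A v) ≤ 0 :=
        mul_nonpos_iff.mpr (Or.inl ⟨le_of_lt hpos, h2⟩)
      linarith
    · exact h12
    · exfalso
      obtain ⟨v, hv0, hvs, hvt⟩ := exists_kernel_vec m A
        (Finset.univ.filter fun j : Fin m => m - i₁ ≤ (j : ℕ) ∧ (j : ℕ) < m)
        (Finset.univ.filter fun j : Fin m => m - i₂ ≤ (j : ℕ) ∧ (j : ℕ) < m)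
        (by rw [card_filter_ico m (m - i₁) m le_rfl, card_filter_ico m (m - i₂) m le_rfl]
            omega)
      have hK : ∀ j : Fin m, (j : ℕ) + 1 < n → v j = 0 := fun j hj =>
        hvs j (by simp only [Finset.mem_filter, Finset.mem_univ, true_and]; omega)
      have h1 : qform m n i₁ v < 0 :=
        qform_neg m n i₁ v hv0 (fun j hj =>
          hvs j (by simp only [Finset.mem_filter, Finset.mem_univ, true_and]
                    intro hc; exact hj hc.1))
          (by omega)
      have h2 : 0 ≤ qform m n i₂ (A v) :=
        qform_nonneg m n i₂ (A v) (fun j hj =>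
          hvt j (by simp only [Finset.mem_filter, Finset.mem_univ, true_and]; exact ⟨hj, j.2⟩))
      have h3 := hrel v hK
      have h4 : 0 ≤ lam * qform m n i₂ (A v) := mul_nonneg (le_of_lt hpos) h2
      linarith
end

section
/- Let k ≥ 2 be an integer, a ∈ ℝ, and let g: D^k → ℝ be defined on the closed unit disk D^k = {x ∈ ℝ^k : ‖x‖ ≤ 1} by g(x) = ‖x‖² + a. Then every fiber of g is connected (each nonempty fiber is a sphere {x : ‖x‖² = t} for some t ∈ [0,1], or empty), and consequently the Reeb space W_g of g is homeomorphic to the closed interval [a, a+1], with the induced map ḡ: W_g → ℝ a homeomorphism onto [a, a+1]. -/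
/-!
STATEMENT 12: for `g : D^k → ℝ`, `g x = ‖x‖² + a` (`k ≥ 2`), every fiber is connected,
and the Reeb space `W_g` is homeomorphic to `[a, a+1]`, the induced map `ḡ : W_g → ℝ`
being a homeomorphism onto `[a, a+1]`.
-/

/-- Two points are Reeb-related if the second lies in the connected component of the
first inside the fiber of `c` through the first point. The Reeb space is the quotient
by (the equivalence relation generated by) this relation. -/
def ReebRel {X Y : Type*} [TopologicalSpace X] (c : X → Y) (x₁ x₂ : X) : Prop :=
  x₂ ∈ connectedComponentIn (c ⁻¹' {c x₁}) x₁

/-- The Reeb space `W_c` of a continuous map `c : X → Y`: the space of connected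
components of the fibers of `c`, with the quotient topology. -/
def ReebSpace {X Y : Type*} [TopologicalSpace X] (c : X → Y) : Type _ :=
  Quot (ReebRel c)

instance {X Y : Type*} [TopologicalSpace X] (c : X → Y) :
    TopologicalSpace (ReebSpace c) :=
  instTopologicalSpaceQuot

/-- The quotient map `q_c : X → W_c` onto the Reeb space. -/
def reebQuot {X Y : Type*} [TopologicalSpace X] (c : X → Y) : X → ReebSpace c :=
  Quot.mk (ReebRel c)

/-- The induced map `c̄ : W_c → Y`, the unique map with `c = c̄ ∘ q_c`. -/
def reebMap {X Y : Type*} [TopologicalSpace X] (c : X → Y) : ReebSpace c → Y :=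
  Quot.lift c (by
    intro a b hab
    have hb : b ∈ c ⁻¹' {c a} := connectedComponentIn_subset _ _ hab
    exact (Set.mem_singleton_iff.mp hb).symm)

/-- Auxiliary: the map from the Reeb space of a real-valued map into a subset
containing the range. -/
def reebToSubset {X : Type*} [TopologicalSpace X] (c : X → ℝ) (S : Set ℝ)
    (h : ∀ x, c x ∈ S) : ReebSpace c → S :=
  Quot.lift (fun x => ⟨c x, h x⟩) (by
    intro x y hxy
    have hb : y ∈ c ⁻¹' {c x} := connectedComponentIn_subset _ _ hxy
    exact Subtype.ext (Set.mem_singleton_iff.mp hb).symm)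

@[simp] lemma reebToSubset_mk {X : Type*} [TopologicalSpace X] (c : X → ℝ) (S : Set ℝ)
    (h : ∀ x, c x ∈ S) (x : X) :
    reebToSubset c S h (Quot.mk (ReebRel c) x) = ⟨c x, h x⟩ := rfl

lemma reebToSubset_continuous {X : Type*} [TopologicalSpace X] (c : X → ℝ) (S : Set ℝ)
    (h : ∀ x, c x ∈ S) (hc : Continuous c) : Continuous (reebToSubset c S h) :=
  continuous_quot_lift _ (Continuous.subtype_mk hc _)

theorem statement12 (k : ℕ) (hk : 2 ≤ k) (a : ℝ)
    (g : (Metric.closedBall (0 : EuclideanSpace ℝ (Fin k)) 1) → ℝ)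
    (hg : ∀ x, g x = ‖(x : EuclideanSpace ℝ (Fin k))‖ ^ 2 + a) :
    -- every fiber of `g` is connected (possibly empty)
    (∀ t : ℝ, IsPreconnected (g ⁻¹' {t})) ∧
    -- every nonempty fiber is the sphere `{x : ‖x‖² = t}` for some `t ∈ [0,1]`
    (∀ t : ℝ, (g ⁻¹' {t}).Nonempty → ∃ s ∈ Set.Icc (0 : ℝ) 1,
        g ⁻¹' {t} = {x | ‖(x : EuclideanSpace ℝ (Fin k))‖ ^ 2 = s}) ∧
    -- the Reeb space is homeomorphic to `[a, a+1]`, via the induced map `ḡ` itself: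
    ∃ h : ReebSpace g ≃ₜ Set.Icc a (a + 1),
      ∀ w : ReebSpace g, reebMap g w = (h w : ℝ) := by
  set E := EuclideanSpace ℝ (Fin k)
  have hrank : 1 < Module.rank ℝ E := by
    rw [← Module.finrank_eq_rank, finrank_euclideanSpace_fin]
    exact_mod_cast lt_of_lt_of_le one_lt_two (by exact_mod_cast hk)
  -- fibers as spheres
  have hfiber : ∀ t : ℝ, 0 ≤ t - a →
      Subtype.val '' (g ⁻¹' {t}) = Metric.sphere (0 : E) (Real.sqrt (t - a)) ∩
        Metric.closedBall (0 : E) 1 := by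
    intro t ht
    ext y
    constructor
    · rintro ⟨x, hx, rfl⟩
      have hx' := hg x
      simp only [Set.mem_preimage, Set.mem_singleton_iff] at hx
      refine ⟨?_, x.2⟩
      have : ‖(x : E)‖ ^ 2 = t - a := by rw [hx] at hx'; linarith
      rw [mem_sphere_zero_iff_norm]
      rw [← Real.sqrt_sq (norm_nonneg (x : E)), this]
    · rintro ⟨hy1, hy2⟩
      refine ⟨⟨y, hy2⟩, ?_, rfl⟩
      simp only [Set.mem_preimage, Set.mem_singleton_iff, hg]
      rw [mem_sphere_zero_iff_norm] at hy1
      rw [hy1, Real.sq_sqrt ht]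
      ring
  have hconn : ∀ t : ℝ, IsPreconnected (g ⁻¹' {t}) := by
    intro t
    rcases le_or_gt 0 (t - a) with ht | ht
    · rw [← Topology.IsInducing.subtypeVal.isPreconnected_image, hfiber t ht]
      rcases (g ⁻¹' {t}).eq_empty_or_nonempty with he | ⟨x, hx⟩
      · rw [← hfiber t ht, he, Set.image_empty]; exact isPreconnected_empty
      · -- sphere radius ≤ 1, so intersection is the whole sphere
        have hx' := hg x
        simp only [Set.mem_preimage, Set.mem_singleton_iff] at hx
        have hsq : ‖(x : E)‖ ^ 2 = t - a := by rw [hx] at hx'; linarith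
        have hr1 : Real.sqrt (t - a) ≤ 1 := by
          rw [← hsq, Real.sqrt_sq (norm_nonneg _)]
          exact mem_closedBall_zero_iff.mp x.2
        have : Metric.sphere (0 : E) (Real.sqrt (t - a)) ∩ Metric.closedBall (0 : E) 1 =
            Metric.sphere (0 : E) (Real.sqrt (t - a)) := by
          apply Set.inter_eq_self_of_subset_left
          intro y hy
          rw [mem_sphere_zero_iff_norm] at hy
          simpa [hy] using hr1
        rw [this]
        exact isPreconnected_sphere hrank _ _
    · have : g ⁻¹' {t} = ∅ := by
        ext x
        simp only [Set.mem_preimage, Set.mem_singleton_iff, hg, Set.mem_empty_iff_false,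
          iff_false]
        nlinarith [sq_nonneg ‖(x : E)‖]
      rw [this]; exact isPreconnected_empty
  refine ⟨hconn, ?_, ?_⟩
  · rintro t ⟨x, hx⟩
    have hx' := hg x
    simp only [Set.mem_preimage, Set.mem_singleton_iff] at hx
    have hsq : ‖(x : E)‖ ^ 2 = t - a := by rw [hx] at hx'; linarith
    have hx1 : ‖(x : E)‖ ≤ 1 := mem_closedBall_zero_iff.mp x.2
    have hx0 : (0:ℝ) ≤ ‖(x : E)‖ := norm_nonneg _
    refine ⟨t - a, ⟨by nlinarith, by nlinarith⟩, ?_⟩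
    ext y
    simp only [Set.mem_image, Set.mem_preimage, Set.mem_singleton_iff, Set.mem_setOf_eq, hg]
    constructor
    · rintro ⟨z, hz, rfl⟩
      linarith
    · intro hy
      have hy1 : ‖y‖ ≤ 1 := by nlinarith [norm_nonneg y]
      exact ⟨⟨y, mem_closedBall_zero_iff.mpr hy1⟩, by simp; linarith, rfl⟩
  · -- the homeomorphism
    have hmem : ∀ x, g x ∈ Set.Icc a (a + 1) := by
      intro x
      have hx1 : ‖(x : E)‖ ≤ 1 := mem_closedBall_zero_iff.mp x.2
      have := norm_nonneg (x : E)
      rw [hg]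
      constructor <;> nlinarith
    have hrel : ∀ x y, g x = g y → ReebRel g x y := by
      intro x y hxy
      have hx : x ∈ g ⁻¹' {g x} := rfl
      have hy : y ∈ g ⁻¹' {g x} := by simp [hxy]
      exact (hconn (g x)).subset_connectedComponentIn hx subset_rfl hy
    have hcontg : Continuous g := by
      have : g = fun x : Metric.closedBall (0 : E) 1 => ‖(x : E)‖ ^ 2 + a := funext hg
      rw [this]; fun_prop
    -- φ : ReebSpace g → Icc a (a+1)
    have hinj : Function.Injective (reebToSubset g _ hmem) := by
      rintro ⟨x⟩ ⟨y⟩ hxy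
      rw [reebToSubset_mk, reebToSubset_mk, Subtype.mk.injEq] at hxy
      exact Quot.sound (hrel x y hxy)
    have hsurj : Function.Surjective (reebToSubset g _ hmem) := by
      rintro ⟨t, ht1, ht2⟩
      have hs0 : 0 ≤ t - a := by linarith
      have hs1 : t - a ≤ 1 := by linarith
      have : Nonempty (Fin k) := ⟨⟨0, by omega⟩⟩
      set y : E := EuclideanSpace.single (Classical.arbitrary (Fin k)) (Real.sqrt (t - a))
      have hny : ‖y‖ = Real.sqrt (t - a) := by
        rw [EuclideanSpace.norm_single]
        exact Real.norm_of_nonneg (Real.sqrt_nonneg _)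
      have hy : y ∈ Metric.closedBall (0 : E) 1 := by
        simp only [Metric.mem_closedBall, dist_zero_right, hny]
        nlinarith [Real.sq_sqrt hs0, Real.sqrt_nonneg (t - a)]
      refine ⟨Quot.mk _ ⟨y, hy⟩, ?_⟩
      rw [reebToSubset_mk]
      apply Subtype.ext
      show g ⟨y, hy⟩ = t
      rw [hg]
      simp only [hny]
      rw [Real.sq_sqrt hs0]
      ring
    haveI : CompactSpace (Metric.closedBall (0 : E) 1) :=
      isCompact_iff_compactSpace.mp (isCompact_closedBall _ _)
    haveI : CompactSpace (ReebSpace g) := by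
      constructor
      have : (Set.univ : Set (ReebSpace g)) = Set.range (Quot.mk (ReebRel g)) := by
        ext w; simp only [Set.mem_univ, Set.mem_range, true_iff]
        exact Quot.exists_rep w
      rw [this]
      exact isCompact_range continuous_quot_mk
    refine ⟨Continuous.homeoOfEquivCompactToT2
      (f := Equiv.ofBijective (reebToSubset g _ hmem) ⟨hinj, hsurj⟩)
      (reebToSubset_continuous g _ hmem hcontg), ?_⟩
    rintro ⟨x⟩
    rfl
end
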